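/- Assume (H1)-(H2) with n ≥ 2, and let x_⋆ ∈ ℝⁿ satisfy x_⋆ ≤ g for all g ∈ Γ. Then M₋(+∞) is a closed subset of ℝⁿ homeomorphic to ℝ^{n−1}, and M₋(+∞) ∩ M₋(q) = ∅ for every equilibrium q ∈ E. -/

import Mathlib

open Set Metric Filter Topology Pointwise

noncomputable section

abbrev Euc (n : ℕ) := EuclideanSpace ℝ (Fin n)

/-- `Φ` is a continuous flow on `ℝⁿ`. -/
def IsFlow {n : ℕ} (Φ : ℝ → Euc n → Euc n) : Prop :=
  Continuous (fun p : ℝ × Euc n => Φ p.1 p.2) ∧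
  (∀ x, Φ 0 x = x) ∧
  (∀ t s x, Φ t (Φ s x) = Φ (t + s) x)

/-- `Cp` is a closed, solid, salient convex cone. -/
def IsConeOrder {n : ℕ} (Cp : Set (Euc n)) : Prop :=
  IsClosed Cp ∧ (∀ x ∈ Cp, ∀ y ∈ Cp, x + y ∈ Cp) ∧
  (∀ α : ℝ, 0 < α → ∀ x ∈ Cp, α • x ∈ Cp) ∧
  (interior Cp).Nonempty ∧ Cp ∩ (-Cp) = {0}

/-- `x ≤ y` iff `y - x ∈ C⁺`. -/
def coneLe {n : ℕ} (Cp : Set (Euc n)) (x y : Euc n) : Prop := y - x ∈ Cp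

/-- `x < y` iff `y - x ∈ C⁺ \ {0}`. -/
def coneLt {n : ℕ} (Cp : Set (Euc n)) (x y : Euc n) : Prop := y - x ∈ Cp ∧ y ≠ x

/-- `x ≪ y` iff `y - x ∈ Int C⁺`. -/
def coneLL {n : ℕ} (Cp : Set (Euc n)) (x y : Euc n) : Prop := y - x ∈ interior Cp

/-- `S` is unordered: no two distinct points related by `≤`. -/
def Unordered {n : ℕ} (Cp : Set (Euc n)) (S : Set (Euc n)) : Prop :=
  ∀ x ∈ S, ∀ y ∈ S, x ≠ y → ¬ coneLe Cp x y

/-- (H1): `Φ` is strongly competitive. -/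
def StronglyCompetitive {n : ℕ} (Φ : ℝ → Euc n → Euc n) (Cp : Set (Euc n)) : Prop :=
  ∀ t : ℝ, 0 < t → ∀ x y : Euc n,
    (coneLe Cp (Φ t x) (Φ t y) → coneLe Cp x y) ∧
    (coneLt Cp (Φ t x) (Φ t y) → coneLL Cp x y)

/-- `D` is invariant under the flow. -/
def Invariant {n : ℕ} (Φ : ℝ → Euc n → Euc n) (D : Set (Euc n)) : Prop :=
  ∀ t : ℝ, Φ t '' D = D

/-- (H2): `Γ` is a compact invariant attractor uniformly attracting all compact sets. -/
def Dissipative {n : ℕ} (Φ : ℝ → Euc n → Euc n) (Γ : Set (Euc n)) : Prop :=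
  Γ.Nonempty ∧ IsCompact Γ ∧ Invariant Φ Γ ∧
  ∀ N : Set (Euc n), IsCompact N → ∀ ε > 0, ∃ T : ℝ, ∀ t ≥ T, ∀ x ∈ N,
    Metric.infDist (Φ t x) Γ < ε

/-- The ω-limit set of `x`. -/
def omegaSet {n : ℕ} (Φ : ℝ → Euc n → Euc n) (x : Euc n) : Set (Euc n) :=
  ⋂ t ∈ Ici (0 : ℝ), closure ((fun τ => Φ τ x) '' Ici t)

/-- The α-limit set of `x`. -/
def alphaSet {n : ℕ} (Φ : ℝ → Euc n → Euc n) (x : Euc n) : Set (Euc n) :=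
  ⋂ t ∈ Iic (0 : ℝ), closure ((fun τ => Φ τ x) '' Iic t)

/-- The set `R(Φ)` of recurrent points. -/
def recurrentSet {n : ℕ} (Φ : ℝ → Euc n → Euc n) : Set (Euc n) :=
  {x | x ∈ omegaSet Φ x}

/-- The Birkhoff center `𝓑(Φ)`. -/
def birkhoffCenter {n : ℕ} (Φ : ℝ → Euc n → Euc n) : Set (Euc n) :=
  closure (recurrentSet Φ)

/-- The set `E` of equilibria. -/
def equilibria {n : ℕ} (Φ : ℝ → Euc n → Euc n) : Set (Euc n) :=
  {p | ∀ t : ℝ, Φ t p = p}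

/-- `C = C⁺ ∪ (−C⁺)`. -/
def coneC {n : ℕ} (Cp : Set (Euc n)) : Set (Euc n) := Cp ∪ (-Cp)

/-- `K = closure(ℝⁿ \ C)`. -/
def coneK {n : ℕ} (Cp : Set (Euc n)) : Set (Euc n) := closure ((coneC Cp)ᶜ)

/-- The translated cone `C_x = x + C`. -/
def coneCAt {n : ℕ} (Cp : Set (Euc n)) (x : Euc n) : Set (Euc n) := {y | y - x ∈ coneC Cp}

/-- The translated complementary cone `K_x = x + K`. -/
def coneKAt {n : ℕ} (Cp : Set (Euc n)) (x : Euc n) : Set (Euc n) := {y | y - x ∈ coneK Cp}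


/-- The lower boundary `∂₋S`. -/
def lowerBdry {n : ℕ} (Cp : Set (Euc n)) (S : Set (Euc n)) : Set (Euc n) :=
  {z | (∃ u : ℕ → Euc n, (∀ i, u i ∈ S) ∧ Filter.Tendsto u Filter.atTop (nhds z) ∧
          ∀ i, coneLL Cp z (u i)) ∧
       ¬ ∃ v : ℕ → Euc n, (∀ i, v i ∈ S) ∧ Filter.Tendsto v Filter.atTop (nhds z) ∧
          ∀ i, coneLL Cp (v i) z}

/-- The upper boundary `∂₊S`. -/
def upperBdry {n : ℕ} (Cp : Set (Euc n)) (S : Set (Euc n)) : Set (Euc n) :=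
  {z | (∃ v : ℕ → Euc n, (∀ i, v i ∈ S) ∧ Filter.Tendsto v Filter.atTop (nhds z) ∧
          ∀ i, coneLL Cp (v i) z) ∧
       ¬ ∃ u : ℕ → Euc n, (∀ i, u i ∈ S) ∧ Filter.Tendsto u Filter.atTop (nhds z) ∧
          ∀ i, coneLL Cp z (u i)}

/-- The basin of repulsion `R(q)`. -/
def basinRep {n : ℕ} (Φ : ℝ → Euc n → Euc n) (q : Euc n) : Set (Euc n) :=
  {x | Filter.Tendsto (fun t : ℝ => Φ (-t) x) Filter.atTop (nhds q)}

/-- The basin of lower repulsion `R₋(q)`. -/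
def basinRepLower {n : ℕ} (Φ : ℝ → Euc n → Euc n) (Cp : Set (Euc n)) (q : Euc n) :
    Set (Euc n) :=
  {x ∈ basinRep Φ q | ∃ T : ℝ, 0 < T ∧ ∀ t ≥ T, coneLL Cp (Φ (-t) x) q}

/-- The basin of upper repulsion `R₊(q)`. -/
def basinRepUpper {n : ℕ} (Φ : ℝ → Euc n → Euc n) (Cp : Set (Euc n)) (q : Euc n) :
    Set (Euc n) :=
  {x ∈ basinRep Φ q | ∃ T : ℝ, 0 < T ∧ ∀ t ≥ T, coneLL Cp q (Φ (-t) x)}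

/-- `M₋(q) = ∂₋R₋(q)`. -/
def Mminus {n : ℕ} (Φ : ℝ → Euc n → Euc n) (Cp : Set (Euc n)) (q : Euc n) : Set (Euc n) :=
  lowerBdry Cp (basinRepLower Φ Cp q)

/-- `M₊(p) = ∂₊R₊(p)`. -/
def Mplus {n : ℕ} (Φ : ℝ → Euc n → Euc n) (Cp : Set (Euc n)) (p : Euc n) : Set (Euc n) :=
  upperBdry Cp (basinRepUpper Φ Cp p)

/-- `R(∞) = {x : |Φ_{−t}(x)| → ∞}`. -/
def repInfty {n : ℕ} (Φ : ℝ → Euc n → Euc n) : Set (Euc n) :=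
  {x | Filter.Tendsto (fun t : ℝ => ‖Φ (-t) x‖) Filter.atTop Filter.atTop}

/-- `R₋(+∞) = Int R̃₋(+∞)`. -/
def RminusInfty {n : ℕ} (Φ : ℝ → Euc n → Euc n) (Cp : Set (Euc n)) (xlo : Euc n) :
    Set (Euc n) :=
  interior {x ∈ repInfty Φ | ∃ T : ℝ, 0 < T ∧ ∀ t ≥ T, coneLL Cp xlo (Φ (-t) x)}

/-- `M₋(+∞) = ∂₋R₋(+∞)`. -/
def MminusInfty {n : ℕ} (Φ : ℝ → Euc n → Euc n) (Cp : Set (Euc n)) (xlo : Euc n) :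
    Set (Euc n) :=
  lowerBdry Cp (RminusInfty Φ Cp xlo)

/-- `R₊(−∞) = Int R̃₊(−∞)`. -/
def RplusInfty {n : ℕ} (Φ : ℝ → Euc n → Euc n) (Cp : Set (Euc n)) (xhi : Euc n) :
    Set (Euc n) :=
  interior {x ∈ repInfty Φ | ∃ T : ℝ, 0 < T ∧ ∀ t ≥ T, coneLL Cp (Φ (-t) x) xhi}

/-- `M₊(−∞) = ∂₊R₊(−∞)`. -/
def MplusInfty {n : ℕ} (Φ : ℝ → Euc n → Euc n) (Cp : Set (Euc n)) (xhi : Euc n) :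
    Set (Euc n) :=
  upperBdry Cp (RplusInfty Φ Cp xhi)

/-!
Fix `e ≫ 0` and write `S = R₋(+∞)`. Backward monotonicity of the flow makes `S` an open set with
`S + C⁺ ⊆ S`, and every line `x + ℝ e` both enters and leaves `S`: points far above the compact
attractor `Γ` are repelled to infinity above `x_⋆`, while points below a point of `Γ` have bounded
backward orbits. So `M₋(+∞)` is the zero set of the entry time `σ x = inf {s | x + s e ∈ S}`, a
continuous function with `σ (x + t e) = σ x - t`; hence it is closed and a graph over a hyperplane.
A point of `M₋(q)` lies strictly below a point of `R(q) ⊆ Γ`, an open condition that no point of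
`closure S ⊇ M₋(+∞)` satisfies.
-/

section UpwardClosed

variable {G : Type*} [AddCommGroup G] [TopologicalSpace G] [IsTopologicalAddGroup G] {A P : Set G}

theorem interior_add_subset_interior (hA : A + P ⊆ A) : interior A + P ⊆ interior A :=
  subset_interior_add_left.trans (interior_mono hA)

theorem add_interior_subset_interior (hA : A + P ⊆ A) : A + interior P ⊆ interior A :=
  subset_interior_add_right.trans (interior_mono hA)

end UpwardClosed

namespace IsConeOrder

variable {n : ℕ} {Cp : Set (Euc n)}

theorem add_subset (hC : IsConeOrder Cp) : Cp + Cp ⊆ Cp := by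
  rintro _ ⟨x, hx, y, hy, rfl⟩
  exact hC.2.1 x hx y hy

theorem smul_mem (hC : IsConeOrder Cp) {α : ℝ} (hα : 0 < α) {x : Euc n} (hx : x ∈ Cp) :
    α • x ∈ Cp :=
  hC.2.2.1 α hα x hx

theorem eq_zero_of_mem_of_neg_mem (hC : IsConeOrder Cp) {x : Euc n} (hx : x ∈ Cp)
    (hx' : -x ∈ Cp) : x = 0 := by
  have hx'' : x ∈ Cp ∩ -Cp := ⟨hx, hx'⟩
  rwa [hC.2.2.2.2] at hx''

theorem zero_mem (hC : IsConeOrder Cp) : (0 : Euc n) ∈ Cp := by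
  have h0 : (0 : Euc n) ∈ Cp ∩ -Cp := by rw [hC.2.2.2.2]; rfl
  exact h0.1

theorem smul_mem_of_nonneg (hC : IsConeOrder Cp) {α : ℝ} (hα : 0 ≤ α) {x : Euc n}
    (hx : x ∈ Cp) : α • x ∈ Cp := by
  rcases hα.eq_or_lt with rfl | hα
  · rw [zero_smul]; exact hC.zero_mem
  · exact hC.smul_mem hα hx

theorem smul_mem_interior (hC : IsConeOrder Cp) {α : ℝ} (hα : 0 < α) {x : Euc n}
    (hx : x ∈ interior Cp) : α • x ∈ interior Cp := by
  have hsub : α • interior Cp ⊆ Cp := by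
    rintro _ ⟨z, hz, rfl⟩
    exact hC.smul_mem hα (interior_subset hz)
  exact interior_maximal hsub ((isOpenMap_smul₀ hα.ne') _ isOpen_interior) ⟨x, hx, rfl⟩

theorem coneLL_of_coneLL_of_coneLe (hC : IsConeOrder Cp) {x y z : Euc n}
    (hxy : coneLL Cp x y) (hyz : coneLe Cp y z) : coneLL Cp x z :=
  interior_add_subset_interior hC.add_subset ⟨_, hxy, _, hyz, sub_add_sub_cancel' y x z⟩

theorem coneLL_of_coneLe_of_coneLL (hC : IsConeOrder Cp) {x y z : Euc n}
    (hxy : coneLe Cp x y) (hyz : coneLL Cp y z) : coneLL Cp x z :=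
  interior_add_subset_interior hC.add_subset ⟨_, hyz, _, hxy, sub_add_sub_cancel z y x⟩

theorem zero_notMem_interior [Nontrivial (Euc n)] (hC : IsConeOrder Cp) :
    (0 : Euc n) ∉ interior Cp := by
  intro h0
  have hsingleton : interior Cp ∩ -interior Cp = {0} := by
    refine Subset.antisymm (fun x hx => ?_) (singleton_subset_iff.2 ⟨h0, by simpa using h0⟩)
    exact hC.eq_zero_of_mem_of_neg_mem (interior_subset hx.1) (interior_subset hx.2)
  exact not_isOpen_singleton (0 : Euc n)
    (hsingleton ▸ isOpen_interior.inter isOpen_interior.neg)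

theorem coneLt_of_coneLL [Nontrivial (Euc n)] (hC : IsConeOrder Cp) {x y : Euc n}
    (h : coneLL Cp x y) : coneLt Cp x y :=
  ⟨interior_subset h, fun hyx => hC.zero_notMem_interior (by rwa [coneLL, hyx, sub_self] at h)⟩

/-- A closed salient cone is normal: `infDist · (-Cp)` is bounded below on `Cp ∩ sphere 0 1`. -/
theorem exists_pos_mul_norm_le_norm_add (hC : IsConeOrder Cp) :
    ∃ c > 0, ∀ x ∈ Cp, ∀ y ∈ Cp, c * ‖x‖ ≤ ‖x + y‖ := by
  set K := Cp ∩ sphere (0 : Euc n) 1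
  have hpos : ∀ x ∈ K, 0 < infDist x (-Cp) := by
    intro x hx
    refine (hC.1.neg.notMem_iff_infDist_pos ⟨0, by simpa using hC.zero_mem⟩).1 fun hx' => ?_
    have hx0 := hC.eq_zero_of_mem_of_neg_mem hx.1 hx'
    simpa [hx0] using hx.2
  obtain ⟨c, hc, hcK⟩ : ∃ c > 0, ∀ x ∈ K, c ≤ infDist x (-Cp) := by
    rcases K.eq_empty_or_nonempty with hK | hK
    · exact ⟨1, one_pos, by simp [hK]⟩
    · obtain ⟨x₀, hx₀, hmin⟩ := ((isCompact_sphere 0 1).inter_left hC.1).exists_isMinOn hK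
        (continuous_infDist_pt _).continuousOn
      exact ⟨_, hpos x₀ hx₀, hmin⟩
  refine ⟨c, hc, fun x hx y hy => ?_⟩
  rcases eq_or_ne x 0 with rfl | hx0
  · simp
  have hxn : 0 < ‖x‖ := norm_pos_iff.2 hx0
  have hxK : ‖x‖⁻¹ • x ∈ K :=
    ⟨hC.smul_mem (inv_pos.2 hxn) hx, by simp [norm_smul, hxn.ne']⟩
  have hy' : -(‖x‖⁻¹ • y) ∈ -Cp := by simpa using hC.smul_mem (inv_pos.2 hxn) hy
  calc c * ‖x‖ ≤ infDist (‖x‖⁻¹ • x) (-Cp) * ‖x‖ := by gcongr; exact hcK _ hxK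
    _ ≤ dist (‖x‖⁻¹ • x) (-(‖x‖⁻¹ • y)) * ‖x‖ := by gcongr; exact infDist_le_dist_of_mem hy'
    _ = ‖x + y‖ := by
      rw [dist_eq_norm, sub_neg_eq_add, ← smul_add, norm_smul, norm_inv, norm_norm]
      field_simp

theorem exists_norm_le_of_coneLe (hC : IsConeOrder Cp) (a : Euc n) (C : ℝ) :
    ∃ M, ∀ w b, coneLe Cp a w → coneLe Cp w b → ‖b‖ ≤ C → ‖w‖ ≤ M := by
  obtain ⟨c, hc, hnormal⟩ := hC.exists_pos_mul_norm_le_norm_add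
  refine ⟨‖a‖ + (C + ‖a‖) / c, fun w b haw hwb hb => ?_⟩
  have hwa : c * ‖w - a‖ ≤ ‖b - a‖ := by
    simpa [sub_add_sub_cancel'] using hnormal _ haw _ hwb
  have hwa' : ‖w - a‖ ≤ (C + ‖a‖) / c := by
    rw [le_div_iff₀ hc]
    linarith [norm_sub_le b a]
  linarith [norm_le_insert' w a]

theorem exists_add_smul_mem_interior (hC : IsConeOrder Cp) {e : Euc n} (he : e ∈ interior Cp)
    (R : ℝ) : ∃ s : ℝ, ∀ v : Euc n, ‖v‖ ≤ R → v + s • e ∈ interior Cp := by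
  obtain ⟨r, hr, hball⟩ := Metric.isOpen_iff.1 isOpen_interior e he
  have hs : 0 < |R| / r + 1 := by positivity
  refine ⟨|R| / r + 1, fun v hv => ?_⟩
  have hmem : e + (|R| / r + 1)⁻¹ • v ∈ interior Cp := by
    refine hball ?_
    rw [mem_ball, dist_eq_norm, add_sub_cancel_left, norm_smul, norm_inv,
      Real.norm_of_nonneg hs.le, inv_mul_lt_iff₀ hs, add_mul, div_mul_cancel₀ _ hr.ne']
    linarith [le_abs_self R]
  rw [add_comm, ← smul_inv_smul₀ hs.ne' v, ← smul_add]
  exact hC.smul_mem_interior hs hmem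

end IsConeOrder

section Flow

variable {n : ℕ} {Φ : ℝ → Euc n → Euc n} {Cp Γ : Set (Euc n)}

theorem IsFlow.apply_apply_neg (hΦ : IsFlow Φ) (t : ℝ) (x : Euc n) : Φ t (Φ (-t) x) = x := by
  rw [hΦ.2.2, add_neg_cancel, hΦ.2.1]

theorem StronglyCompetitive.coneLe_apply_neg (hcomp : StronglyCompetitive Φ Cp) (hΦ : IsFlow Φ)
    {t : ℝ} (ht : 0 < t) {x y : Euc n} (h : coneLe Cp x y) :
    coneLe Cp (Φ (-t) x) (Φ (-t) y) :=
  (hcomp t ht _ _).1 (by rwa [hΦ.apply_apply_neg, hΦ.apply_apply_neg])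

theorem StronglyCompetitive.coneLL_apply_neg (hcomp : StronglyCompetitive Φ Cp) (hΦ : IsFlow Φ)
    {t : ℝ} (ht : 0 < t) {x y : Euc n} (h : coneLt Cp x y) :
    coneLL Cp (Φ (-t) x) (Φ (-t) y) :=
  (hcomp t ht _ _).2 (by rwa [hΦ.apply_apply_neg, hΦ.apply_apply_neg])

namespace Dissipative

theorem apply_mem (hΓ : Dissipative Φ Γ) {g : Euc n} (hg : g ∈ Γ) (t : ℝ) : Φ t g ∈ Γ := by
  rw [← hΓ.2.2.1 t]
  exact mem_image_of_mem _ hg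

theorem exists_norm_le (hΓ : Dissipative Φ Γ) : ∃ C, ∀ g ∈ Γ, ‖g‖ ≤ C := by
  obtain ⟨C, hC⟩ := hΓ.2.1.isBounded.subset_closedBall 0
  exact ⟨C, fun g hg => mem_closedBall_zero_iff.1 (hC hg)⟩

/-- `x = Φ t (Φ (-t) x)` with `Φ (-t) x` in a fixed ball, which `Γ` attracts uniformly. -/
theorem mem_of_frequently_norm_le (hΓ : Dissipative Φ Γ) (hΦ : IsFlow Φ) {x : Euc n} {M : ℝ}
    (h : ∃ᶠ t in atTop, ‖Φ (-t) x‖ ≤ M) : x ∈ Γ := by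
  rw [hΓ.2.1.isClosed.mem_iff_infDist_zero hΓ.1]
  by_contra hx
  obtain ⟨T, hT⟩ := hΓ.2.2.2 (closedBall 0 M) (isCompact_closedBall _ _) _
    (infDist_nonneg.lt_of_ne' hx)
  obtain ⟨t, htM, htT⟩ := (h.and_eventually (eventually_ge_atTop T)).exists
  have hlt := hT t htT _ (mem_closedBall_zero_iff.2 htM)
  rw [hΦ.apply_apply_neg] at hlt
  exact lt_irrefl _ hlt

theorem mem_repInfty_of_notMem (hΓ : Dissipative Φ Γ) (hΦ : IsFlow Φ) {x : Euc n}
    (hx : x ∉ Γ) : x ∈ repInfty Φ := by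
  refine tendsto_atTop.2 fun M => ?_
  by_contra h
  exact hx (hΓ.mem_of_frequently_norm_le hΦ ((not_eventually.1 h).mono fun t ht => le_of_not_ge ht))

theorem basinRep_subset (hΓ : Dissipative Φ Γ) (hΦ : IsFlow Φ) (q : Euc n) :
    basinRep Φ q ⊆ Γ := fun _ hx =>
  hΓ.mem_of_frequently_norm_le hΦ
    ((hx.norm.eventually (gt_mem_nhds (lt_add_one ‖q‖))).frequently.mono fun _ ht => ht.le)

end Dissipative

end Flow

/-- The paper's `R̃₋(+∞)`: `RminusInfty Φ Cp xlo` is by definition its interior. -/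
def RtildeMinusInfty {n : ℕ} (Φ : ℝ → Euc n → Euc n) (Cp : Set (Euc n)) (xlo : Euc n) :
    Set (Euc n) :=
  {x ∈ repInfty Φ | ∃ T : ℝ, 0 < T ∧ ∀ t ≥ T, coneLL Cp xlo (Φ (-t) x)}

section RepulsionFromInfinity

variable {n : ℕ} {Φ : ℝ → Euc n → Euc n} {Cp Γ : Set (Euc n)} {xlo : Euc n}

theorem RtildeMinusInfty_add_subset (hC : IsConeOrder Cp) (hΦ : IsFlow Φ)
    (hcomp : StronglyCompetitive Φ Cp) :
    RtildeMinusInfty Φ Cp xlo + Cp ⊆ RtildeMinusInfty Φ Cp xlo := by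
  rintro _ ⟨x, ⟨hinf, T, hT, hll⟩, c, hc, rfl⟩
  have hle : ∀ t ≥ T, coneLe Cp (Φ (-t) x) (Φ (-t) (x + c)) := fun t ht =>
    hcomp.coneLe_apply_neg hΦ (hT.trans_le ht) (by rwa [coneLe, add_sub_cancel_left])
  refine ⟨tendsto_atTop.2 fun C => ?_, T, hT, fun t ht =>
    hC.coneLL_of_coneLL_of_coneLe (hll t ht) (hle t ht)⟩
  obtain ⟨M, hM⟩ := hC.exists_norm_le_of_coneLe xlo C
  filter_upwards [hinf.eventually_gt_atTop M, eventually_ge_atTop T] with t htM ht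
  by_contra hb
  exact (hM _ _ (interior_subset (hll t ht)) (hle t ht) (not_le.1 hb).le).not_gt htM

theorem notMem_RtildeMinusInfty_of_coneLe (hC : IsConeOrder Cp) (hΦ : IsFlow Φ)
    (hcomp : StronglyCompetitive Φ Cp) (hΓ : Dissipative Φ Γ) {g x : Euc n} (hg : g ∈ Γ)
    (hxg : coneLe Cp x g) : x ∉ RtildeMinusInfty Φ Cp xlo := by
  rintro ⟨hinf, T, hT, hll⟩
  obtain ⟨C, hCΓ⟩ := hΓ.exists_norm_le
  obtain ⟨M, hM⟩ := hC.exists_norm_le_of_coneLe xlo C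
  obtain ⟨t, htM, htT⟩ := ((hinf.eventually_gt_atTop M).and (eventually_ge_atTop T)).exists
  exact htM.not_ge (hM _ _ (interior_subset (hll t htT))
    (hcomp.coneLe_apply_neg hΦ (hT.trans_le htT) hxg) (hCΓ _ (hΓ.apply_mem hg _)))

theorem mem_RtildeMinusInfty_of_forall_coneLL [Nontrivial (Euc n)] (hC : IsConeOrder Cp)
    (hΦ : IsFlow Φ) (hcomp : StronglyCompetitive Φ Cp) (hΓ : Dissipative Φ Γ)
    (hlo : ∀ g ∈ Γ, coneLe Cp xlo g) {x : Euc n} (hx : ∀ g ∈ Γ, coneLL Cp g x) :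
    x ∈ RtildeMinusInfty Φ Cp xlo := by
  have hxΓ : x ∉ Γ := fun h => hC.zero_notMem_interior (by simpa [coneLL] using hx x h)
  refine ⟨hΓ.mem_repInfty_of_notMem hΦ hxΓ, 1, one_pos, fun t ht => ?_⟩
  obtain ⟨g, hg⟩ := hΓ.1
  exact hC.coneLL_of_coneLe_of_coneLL (hlo _ (hΓ.apply_mem hg (-t)))
    (hcomp.coneLL_apply_neg hΦ (one_pos.trans_le ht) (hC.coneLt_of_coneLL (hx g hg)))

theorem disjoint_RminusInfty (hC : IsConeOrder Cp) (hΦ : IsFlow Φ)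
    (hcomp : StronglyCompetitive Φ Cp) (hΓ : Dissipative Φ Γ) :
    Disjoint (RminusInfty Φ Cp xlo) {y | ∃ g ∈ Γ, coneLL Cp y g} :=
  disjoint_left.2 fun _ hy ⟨_, hg, hyg⟩ =>
    notMem_RtildeMinusInfty_of_coneLe hC hΦ hcomp hΓ hg (interior_subset hyg) (interior_subset hy)

end RepulsionFromInfinity

structure IsUpperRegion {n : ℕ} (Cp : Set (Euc n)) (e : Euc n) (S : Set (Euc n)) : Prop where
  isOpen : IsOpen S
  add_subset : S + Cp ⊆ S
  exists_mem : ∀ x : Euc n, ∃ s : ℝ, x + s • e ∈ S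
  exists_notMem : ∀ x : Euc n, ∃ s : ℝ, x + s • e ∉ S

def entryTime {n : ℕ} (S : Set (Euc n)) (e x : Euc n) : ℝ :=
  sInf {s : ℝ | x + s • e ∈ S}

theorem tendsto_add_div_smul {n : ℕ} (z e : Euc n) (c : ℝ) :
    Tendsto (fun i : ℕ => z + (c / ((i : ℝ) + 1)) • e) atTop (𝓝 z) := by
  have hc : Tendsto (fun i : ℕ => c / ((i : ℝ) + 1)) atTop (𝓝 0) := by
    simpa [div_eq_mul_inv] using tendsto_one_div_add_atTop_nhds_zero_nat.const_mul c
  simpa using tendsto_const_nhds.add (hc.smul_const e)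

namespace IsUpperRegion

variable {n : ℕ} {Cp S : Set (Euc n)} {e : Euc n}

theorem add_smul_mem_of_le (hC : IsConeOrder Cp) (he : e ∈ interior Cp) (hS : IsUpperRegion Cp e S)
    {x : Euc n} {s s' : ℝ} (hs : x + s • e ∈ S) (hss' : s ≤ s') : x + s' • e ∈ S := by
  have hx : x + s' • e = (x + s • e) + (s' - s) • e := by rw [sub_smul]; abel
  rw [hx]
  exact hS.add_subset
    (add_mem_add hs (hC.smul_mem_of_nonneg (sub_nonneg.2 hss') (interior_subset he)))

theorem setOf_add_smul_mem_eq_Ioi (hC : IsConeOrder Cp) (he : e ∈ interior Cp)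
    (hS : IsUpperRegion Cp e S) (x : Euc n) :
    {s : ℝ | x + s • e ∈ S} = Ioi (entryTime S e x) := by
  obtain ⟨s₁, hs₁⟩ := hS.exists_notMem x
  have hbdd : BddBelow {s : ℝ | x + s • e ∈ S} :=
    ⟨s₁, fun s hs => le_of_not_gt fun hlt => hs₁ (hS.add_smul_mem_of_le hC he hs hlt.le)⟩
  refine Subset.antisymm (fun s hs => ?_) (fun s hs => ?_)
  · obtain ⟨l, hls, hl⟩ := exists_Ioc_subset_of_mem_nhds
      ((hS.isOpen.preimage (by fun_prop)).mem_nhds hs) ⟨s - 1, sub_one_lt s⟩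
    have hmid : (l + s) / 2 ∈ Ioc l s := ⟨by linarith, by linarith⟩
    exact (csInf_le hbdd (hl hmid)).trans_lt (by linarith)
  · obtain ⟨a, ha, has⟩ := exists_lt_of_csInf_lt (hS.exists_mem x) hs
    exact hS.add_smul_mem_of_le hC he ha has.le

theorem add_smul_mem_iff (hC : IsConeOrder Cp) (he : e ∈ interior Cp) (hS : IsUpperRegion Cp e S)
    {x : Euc n} {s : ℝ} : x + s • e ∈ S ↔ entryTime S e x < s := by
  rw [← mem_Ioi, ← hS.setOf_add_smul_mem_eq_Ioi hC he x]
  exact Iff.rfl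

theorem mem_iff_entryTime_neg (hC : IsConeOrder Cp) (he : e ∈ interior Cp)
    (hS : IsUpperRegion Cp e S) {x : Euc n} : x ∈ S ↔ entryTime S e x < 0 := by
  simpa using hS.add_smul_mem_iff hC he (x := x) (s := 0)

theorem entryTime_add_smul (hC : IsConeOrder Cp) (he : e ∈ interior Cp)
    (hS : IsUpperRegion Cp e S) (x : Euc n) (t : ℝ) :
    entryTime S e (x + t • e) = entryTime S e x - t := by
  have hset : {s : ℝ | x + t • e + s • e ∈ S} = Ioi (entryTime S e x - t) := by
    ext s
    rw [mem_Ioi, sub_lt_iff_lt_add', ← hS.add_smul_mem_iff hC he, add_smul, ← add_assoc]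
    exact Iff.rfl
  rw [entryTime, hset, csInf_Ioi]

theorem entryTime_nonpos_of_mem_closure (hC : IsConeOrder Cp) (he : e ∈ interior Cp)
    (hS : IsUpperRegion Cp e S) {x : Euc n} (hx : x ∈ closure S) : entryTime S e x ≤ 0 := by
  refine le_of_forall_pos_lt_add fun ε hε => ?_
  rw [zero_add, ← hS.add_smul_mem_iff hC he]
  have hmem : x + ε • e ∈ closure S + interior Cp := add_mem_add hx (hC.smul_mem_interior hε he)
  rw [isOpen_interior.closure_add] at hmem
  exact add_interior_subset_interior hS.add_subset hmem |> interior_subset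

theorem continuous_entryTime (hC : IsConeOrder Cp) (he : e ∈ interior Cp)
    (hS : IsUpperRegion Cp e S) : Continuous (entryTime S e) := by
  refine continuous_iff_continuousAt.2 fun x => tendsto_order.2 ⟨fun b hb => ?_, fun b hb => ?_⟩
  · obtain ⟨b', hbb', hb'⟩ := exists_between hb
    have hx : x + b' • e ∉ closure S := fun h => by
      have := hS.entryTime_nonpos_of_mem_closure hC he h
      rw [hS.entryTime_add_smul hC he] at this
      linarith
    filter_upwards [(isClosed_closure.isOpen_compl.preimage
      (continuous_add_const (b' • e))).mem_nhds hx] with y hy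
    by_contra hyb
    exact hy (subset_closure ((hS.add_smul_mem_iff hC he).2 (by linarith)))
  · filter_upwards [(hS.isOpen.preimage (continuous_add_const (b • e))).mem_nhds
      ((hS.add_smul_mem_iff hC he).2 hb)] with y hy
    exact (hS.add_smul_mem_iff hC he).1 hy

theorem lowerBdry_eq (hC : IsConeOrder Cp) (he : e ∈ interior Cp) (hS : IsUpperRegion Cp e S) :
    lowerBdry Cp S = {x | entryTime S e x = 0} := by
  ext z
  constructor
  · rintro ⟨⟨u, huS, hu, -⟩, hnv⟩
    refine le_antisymm ?_ ?_
    · exact hS.entryTime_nonpos_of_mem_closure hC he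
        (mem_closure_of_tendsto hu (Eventually.of_forall huS))
    · by_contra! hneg
      refine hnv ⟨fun i => z + (entryTime S e z / 2 / ((i : ℝ) + 1)) • e, fun i => ?_,
        tendsto_add_div_smul z e _, fun i => ?_⟩
      · rw [hS.add_smul_mem_iff hC he, lt_div_iff₀ (by positivity)]
        nlinarith [(Nat.cast_nonneg i : (0 : ℝ) ≤ i)]
      · rw [coneLL, sub_add_cancel_left, ← neg_smul, ← neg_div]
        exact hC.smul_mem_interior (div_pos (by linarith) (by positivity)) he
  intro hz
  replace hz : entryTime S e z = 0 := hz
  constructor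
  · refine ⟨fun i => z + (1 / ((i : ℝ) + 1)) • e, fun i => ?_, tendsto_add_div_smul z e 1,
      fun i => ?_⟩
    · rw [hS.add_smul_mem_iff hC he, hz]
      positivity
    · rw [coneLL, add_sub_cancel_left]
      exact hC.smul_mem_interior (by positivity) he
  · rintro ⟨v, hvS, -, hvz⟩
    have hzS : z ∈ S := by
      simpa using hS.add_subset (add_mem_add (hvS 0) (interior_subset (hvz 0)))
    rw [hS.mem_iff_entryTime_neg hC he, hz] at hzS
    exact lt_irrefl _ hzS

end IsUpperRegion

section Graph

variable {E : Type*} [AddCommGroup E] [Module ℝ E] [TopologicalSpace E] [IsTopologicalAddGroup E]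
  [ContinuousSMul ℝ E]

def zeroSetHomeomorphKer {σ : E → ℝ} (hσ : Continuous σ) {e : E}
    (hshift : ∀ x (t : ℝ), σ (x + t • e) = σ x - t) {l : E →L[ℝ] ℝ} (hl : l e = 1) :
    {x | σ x = 0} ≃ₜ LinearMap.ker (l : E →ₗ[ℝ] ℝ) where
  toFun z := ⟨z - l z • e, by simp [hl]⟩
  invFun y := ⟨y + σ y • e, by simp [hshift]⟩
  left_inv z := by
    have hz : σ z = 0 := z.2
    ext1
    change (z : E) - l z • e + σ (z - l z • e) • e = z
    rw [sub_eq_add_neg, ← neg_smul, hshift, hz, zero_sub, neg_neg, neg_smul, neg_add_cancel_right]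
  right_inv y := by
    have hy : l y = 0 := y.2
    ext1
    simp [hl, hy]
  continuous_toFun := by fun_prop
  continuous_invFun := by fun_prop

end Graph

namespace IsUpperRegion

variable {n : ℕ} {Cp S : Set (Euc n)} {e : Euc n}

theorem isClosed_lowerBdry (hC : IsConeOrder Cp) (he : e ∈ interior Cp)
    (hS : IsUpperRegion Cp e S) : IsClosed (lowerBdry Cp S) := by
  rw [hS.lowerBdry_eq hC he]
  exact isClosed_eq (hS.continuous_entryTime hC he) continuous_const

theorem nonempty_homeomorph_lowerBdry [Nontrivial (Euc n)] (hC : IsConeOrder Cp)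
    (he : e ∈ interior Cp) (hS : IsUpperRegion Cp e S) :
    Nonempty (lowerBdry Cp S ≃ₜ Euc (n - 1)) := by
  have he0 : e ≠ 0 := fun h => hC.zero_notMem_interior (h ▸ he)
  obtain ⟨l, hl⟩ := SeparatingDual.exists_eq_one (R := ℝ) he0
  have hrank :
      Module.finrank ℝ (LinearMap.ker (l : Euc n →ₗ[ℝ] ℝ)) = Module.finrank ℝ (Euc (n - 1)) := by
    have := Module.Dual.finrank_ker_add_one_of_ne_zero (f := (l : Euc n →ₗ[ℝ] ℝ))
      fun h => by simpa [hl] using LinearMap.congr_fun h e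
    simp only [finrank_euclideanSpace_fin] at this ⊢
    omega
  rw [hS.lowerBdry_eq hC he]
  exact ⟨(zeroSetHomeomorphKer (hS.continuous_entryTime hC he) (hS.entryTime_add_smul hC he)
    hl).trans (LinearEquiv.ofFinrankEq _ _ hrank).toContinuousLinearEquiv.toHomeomorph⟩

end IsUpperRegion

section Boundaries

variable {n : ℕ} {Φ : ℝ → Euc n → Euc n} {Cp Γ : Set (Euc n)} {xlo : Euc n}

theorem isUpperRegion_RminusInfty [Nontrivial (Euc n)] (hC : IsConeOrder Cp) (hΦ : IsFlow Φ)
    (hcomp : StronglyCompetitive Φ Cp) (hΓ : Dissipative Φ Γ) (hlo : ∀ g ∈ Γ, coneLe Cp xlo g)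
    {e : Euc n} (he : e ∈ interior Cp) : IsUpperRegion Cp e (RminusInfty Φ Cp xlo) where
  isOpen := isOpen_interior
  add_subset := interior_add_subset_interior (RtildeMinusInfty_add_subset hC hΦ hcomp)
  exists_mem x := by
    obtain ⟨C, hCΓ⟩ := hΓ.exists_norm_le
    obtain ⟨s, hs⟩ := hC.exists_add_smul_mem_interior he (‖x‖ + C)
    have hx : x + s • e ∈ RtildeMinusInfty Φ Cp xlo := by
      refine mem_RtildeMinusInfty_of_forall_coneLL hC hΦ hcomp hΓ hlo fun g hg => ?_
      have hxg := hs (x - g) ((norm_sub_le x g).trans (by linarith [hCΓ g hg]))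
      rwa [sub_add_eq_add_sub] at hxg
    refine ⟨s + 1, ?_⟩
    rw [add_smul, one_smul, ← add_assoc]
    exact add_interior_subset_interior (RtildeMinusInfty_add_subset hC hΦ hcomp)
      (add_mem_add hx he)
  exists_notMem x := by
    obtain ⟨g, hg⟩ := hΓ.1
    obtain ⟨s, hs⟩ := hC.exists_add_smul_mem_interior he ‖g - x‖
    refine ⟨-s, fun hx => notMem_RtildeMinusInfty_of_coneLe hC hΦ hcomp hΓ hg ?_
      (interior_subset hx)⟩
    have hxg := interior_subset (hs (g - x) le_rfl)
    rwa [neg_smul, ← sub_eq_add_neg, coneLe, sub_sub_eq_add_sub, add_sub_right_comm]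

theorem isOpen_setOf_exists_coneLL (Γ : Set (Euc n)) :
    IsOpen {y : Euc n | ∃ g ∈ Γ, coneLL Cp y g} := by
  refine isOpen_iff_mem_nhds.2 fun y ⟨g, hg, hyg⟩ => ?_
  filter_upwards [(isOpen_interior.preimage (continuous_const.sub continuous_id)).mem_nhds hyg]
    with y' hy'
  exact ⟨g, hg, hy'⟩

theorem Mminus_subset_setOf_exists_coneLL (hΦ : IsFlow Φ) (hΓ : Dissipative Φ Γ) (q : Euc n) :
    Mminus Φ Cp q ⊆ {y | ∃ g ∈ Γ, coneLL Cp y g} := fun _ ⟨⟨u, hu, _, hzu⟩, _⟩ =>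
  ⟨u 0, hΓ.basinRep_subset hΦ q (hu 0).1, hzu 0⟩

theorem lowerBdry_subset_closure (S : Set (Euc n)) : lowerBdry Cp S ⊆ closure S :=
  fun _ ⟨⟨_, huS, hu, _⟩, _⟩ => mem_closure_of_tendsto hu (Eventually.of_forall huS)

end Boundaries

theorem stmt14 {n : ℕ} (hn : 2 ≤ n) (Φ : ℝ → Euc n → Euc n) (Cp Γ : Set (Euc n))
    (hΦ : IsFlow Φ) (hC : IsConeOrder Cp) (hcomp : StronglyCompetitive Φ Cp)
    (hΓ : Dissipative Φ Γ)
    (xlo : Euc n) (hlo : ∀ g ∈ Γ, coneLe Cp xlo g) :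
    IsClosed (MminusInfty Φ Cp xlo) ∧
    Nonempty (↥(MminusInfty Φ Cp xlo) ≃ₜ Euc (n - 1)) ∧
    ∀ q ∈ equilibria Φ, MminusInfty Φ Cp xlo ∩ Mminus Φ Cp q = ∅ := by
  have : NeZero n := ⟨by omega⟩
  obtain ⟨e, he⟩ := hC.2.2.2.1
  have hS := isUpperRegion_RminusInfty hC hΦ hcomp hΓ hlo (xlo := xlo) he
  refine ⟨hS.isClosed_lowerBdry hC he, hS.nonempty_homeomorph_lowerBdry hC he, fun q _ => ?_⟩
  refine disjoint_iff_inter_eq_empty.1 (Disjoint.mono (lowerBdry_subset_closure _)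
    (Mminus_subset_setOf_exists_coneLL hΦ hΓ q) ?_)
  exact (disjoint_RminusInfty hC hΦ hcomp hΓ).closure_left (isOpen_setOf_exists_coneLL Γ)
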